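/- If 𝒜 is a synchronizing automaton with n states and u ∈ Rad(𝒜) is a radical word, then the power u^{n−1} is a reset word of 𝒜. -/

import Mathlib

open scoped BigOperators

set_option synthInstance.maxHeartbeats 1000000
set_option maxHeartbeats 1000000

noncomputable section

/-- Action of a word on a state: `q · u`. -/
def actW {Q A : Type*} (δ : Q → A → Q) (q : Q) (u : List A) : Q :=
  u.foldl δ q

/-- The image `Q · u` of the full state set under a word. -/
def imageSet {Q A : Type*} [Fintype Q] [DecidableEq Q] (δ : Q → A → Q) (u : List A) :
    Finset Q :=
  Finset.image (fun q => actW δ q u) Finset.univ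

/-- The rank `rk(u) = |Q · u|` of a word. -/
def wordRank {Q A : Type*} [Fintype Q] [DecidableEq Q] (δ : Q → A → Q) (u : List A) : ℕ :=
  (imageSet δ u).card

/-- A word is reset (synchronizing) if `|Q · u| = 1`. -/
def IsReset {Q A : Type*} [Fintype Q] [DecidableEq Q] (δ : Q → A → Q) (u : List A) : Prop :=
  wordRank δ u = 1

/-- The automaton is synchronizing if it admits a reset word. -/
def IsSynchronizing {Q A : Type*} [Fintype Q] [DecidableEq Q] (δ : Q → A → Q) : Prop :=
  ∃ u : List A, IsReset δ u

/-- `Syn(𝒜)`, the set of reset words. -/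
def SynWords {Q A : Type*} [Fintype Q] [DecidableEq Q] (δ : Q → A → Q) : Set (List A) :=
  {u | IsReset δ u}

/-- The hyperplane `w⊥ = {v ∈ ℂQ : ∑ q, v q = 0}`. -/
def Wperp (Q : Type*) [Fintype Q] : Submodule ℂ (Q → ℂ) :=
  LinearMap.ker (∑ q : Q, (LinearMap.proj q : (Q → ℂ) →ₗ[ℂ] ℂ))

theorem mem_Wperp {Q : Type*} [Fintype Q] (v : Q → ℂ) :
    v ∈ Wperp Q ↔ ∑ q : Q, v q = 0 := by
  simp [Wperp, LinearMap.mem_ker, LinearMap.sum_apply]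

/-- The (right) action of a word on row vectors `v ↦ v·π(u)`. -/
def piLin {Q A : Type*} [Fintype Q] [DecidableEq Q] (δ : Q → A → Q) (u : List A) :
    (Q → ℂ) →ₗ[ℂ] (Q → ℂ) where
  toFun v := fun p => ∑ q ∈ Finset.univ.filter (fun q => actW δ q u = p), v q
  map_add' := by
    intro a b; funext p; simp [Finset.sum_add_distrib]
  map_smul' := by
    intro c v; funext p; simp [Finset.mul_sum]

theorem piLin_mem {Q A : Type*} [Fintype Q] [DecidableEq Q] (δ : Q → A → Q) (u : List A) :
    ∀ v ∈ Wperp Q, piLin δ u v ∈ Wperp Q := by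
  intro v hv
  rw [mem_Wperp] at hv ⊢
  have h := Finset.sum_fiberwise (Finset.univ : Finset Q) (fun q => actW δ q u) v
  calc ∑ p : Q, piLin δ u v p
      = ∑ p : Q, ∑ q ∈ Finset.univ.filter (fun q => actW δ q u = p), v q := rfl
    _ = ∑ q : Q, v q := h
    _ = 0 := hv

/-- The endomorphism of `w⊥` induced by a word. -/
def rhoEnd {Q A : Type*} [Fintype Q] [DecidableEq Q] (δ : Q → A → Q) (u : List A) :
    Module.End ℂ (Wperp Q) :=
  (piLin δ u).restrict (piLin_mem δ u)

/-- The representation `ρ : Σ* → End(w⊥)`; we record it in the multiplicative opposite so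
that `ρ (u ++ v) = ρ u * ρ v` (the paper's right-action convention). -/
def rho {Q A : Type*} [Fintype Q] [DecidableEq Q] (δ : Q → A → Q) (u : List A) :
    (Module.End ℂ (Wperp Q))ᵐᵒᵖ :=
  MulOpposite.op (rhoEnd δ u)

/-- `ℛ`, the ℂ-subalgebra generated by `ρ(Σ*)`. -/
def Ralg {Q A : Type*} [Fintype Q] [DecidableEq Q] (δ : Q → A → Q) :
    Subalgebra ℂ (Module.End ℂ (Wperp Q))ᵐᵒᵖ :=
  Algebra.adjoin ℂ (Set.range (rho δ))

/-- `ρ(u)` seen as an element of `ℛ`. -/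
def rhoR {Q A : Type*} [Fintype Q] [DecidableEq Q] (δ : Q → A → Q) (u : List A) :
    Ralg δ :=
  ⟨rho δ u, Algebra.subset_adjoin (Set.mem_range_self u)⟩

/-- The Jacobson radical `Rad(ℛ)` of `ℛ`, realised as a subset of the ambient algebra via
the standard characterisation: `x ∈ Rad(ℛ)` iff `x ∈ ℛ` and for every `y ∈ ℛ` the element
`1 - y * x` is left-invertible in `ℛ`. -/
def RadSet {Q A : Type*} [Fintype Q] [DecidableEq Q] (δ : Q → A → Q) :
    Set (Module.End ℂ (Wperp Q))ᵐᵒᵖ :=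
  {x | x ∈ Ralg δ ∧ ∀ y ∈ Ralg δ, ∃ z ∈ Ralg δ, z * (1 - y * x) = 1}

/-- `Rad(𝒜)`: the set of radical words, i.e. words `u` with `ρ(u) ∈ Rad(ℛ)`. -/
def RadWords {Q A : Type*} [Fintype Q] [DecidableEq Q] (δ : Q → A → Q) : Set (List A) :=
  {u | rho δ u ∈ RadSet δ}

/-- The automaton is semisimple when `Rad(𝒜) = Syn(𝒜)`. -/
def IsSemisimple {Q A : Type*} [Fintype Q] [DecidableEq Q] (δ : Q → A → Q) : Prop :=
  RadWords δ = SynWords δ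

/-- The `t`-packing number `D(t,r,n)`: the maximum size of a family of `r`-subsets of an
`n`-set in which every `t`-subset is contained in at most one member. -/
def packingNumber (t r n : ℕ) : ℕ :=
  sSup {m | ∃ F : Finset (Finset (Fin n)), F.card = m ∧ (∀ S ∈ F, S.card = r) ∧
    ∀ T : Finset (Fin n), T.card = t → (F.filter fun S => T ⊆ S).card ≤ 1}

/-- The former-rank `Fr(𝒜)`: the least rank of a non-reset word. -/
def formerRank {Q A : Type*} [Fintype Q] [DecidableEq Q] (δ : Q → A → Q) : ℕ :=
  sInf {m | ∃ u : List A, ¬ IsReset δ u ∧ wordRank δ u = m}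

/-- `Fs(𝒜)`: the set of former-synchronizing words. -/
def Fs {Q A : Type*} [Fintype Q] [DecidableEq Q] (δ : Q → A → Q) : Set (List A) :=
  {u | wordRank δ u = formerRank δ}

/-- `θ_i(u)`: the image of `ρ(u)` in the `i`-th Wedderburn–Artin matrix component, where
`e : ℛ → ∏ i, M_{n_i}(ℂ)` is the quotient map `ψ` followed by the fixed isomorphism. -/
def theta {Q A : Type*} [Fintype Q] [DecidableEq Q] (δ : Q → A → Q) {k : ℕ} {nn : Fin k → ℕ}
    (e : Ralg δ →ₐ[ℂ] ∀ i : Fin k, Matrix (Fin (nn i)) (Fin (nn i)) ℂ)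
    (u : List A) (i : Fin k) : Matrix (Fin (nn i)) (Fin (nn i)) ℂ :=
  e (rhoR δ u) i

/-- `supp(v) = {i : θ_i(v) ≠ 0}`. -/
def suppW {Q A : Type*} [Fintype Q] [DecidableEq Q] (δ : Q → A → Q) {k : ℕ} {nn : Fin k → ℕ}
    (e : Ralg δ →ₐ[ℂ] ∀ i : Fin k, Matrix (Fin (nn i)) (Fin (nn i)) ℂ)
    (v : List A) : Set (Fin k) :=
  {i | theta δ e v i ≠ 0}

/-- `u ∈ Σ* v Σ*`, i.e. `v` is a factor of `u`. -/
def InFactor {A : Type*} (v u : List A) : Prop :=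
  ∃ a b : List A, u = a ++ v ++ b

/-- `u` is a `v`-minimal word: `u ∈ Σ*vΣ*`, `supp(u)` is nonempty, and `supp(u)` is minimal
among the nonempty supports of words in `Σ*vΣ*`. -/
def IsVMinimal {Q A : Type*} [Fintype Q] [DecidableEq Q] (δ : Q → A → Q) {k : ℕ}
    {nn : Fin k → ℕ}
    (e : Ralg δ →ₐ[ℂ] ∀ i : Fin k, Matrix (Fin (nn i)) (Fin (nn i)) ℂ)
    (v u : List A) : Prop :=
  InFactor v u ∧ (suppW δ e u).Nonempty ∧
    ∀ z : List A, InFactor v z → suppW δ e z ⊆ suppW δ e u →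
      suppW δ e z = ∅ ∨ suppW δ e z = suppW δ e u

/-- The `i`-th factor monoid `ℳ_i = θ_i(Σ*)`. -/
def factorMonoid {Q A : Type*} [Fintype Q] [DecidableEq Q] (δ : Q → A → Q) {k : ℕ}
    {nn : Fin k → ℕ}
    (e : Ralg δ →ₐ[ℂ] ∀ i : Fin k, Matrix (Fin (nn i)) (Fin (nn i)) ℂ)
    (i : Fin k) : Set (Matrix (Fin (nn i)) (Fin (nn i)) ℂ) :=
  Set.range fun u : List A => theta δ e u i

/-- A two-sided ideal of the (sub)monoid `M`. -/
def IsSetIdeal {X : Type*} [Mul X] (M I : Set X) : Prop :=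
  I ⊆ M ∧ ∀ a ∈ M, ∀ x ∈ I, a * x ∈ I ∧ x * a ∈ I

/-- `I` is a `0`-minimal (two-sided) ideal of the monoid `M`. -/
def IsZeroMinimalIdeal {X : Type*} [Mul X] [Zero X] (M I : Set X) : Prop :=
  IsSetIdeal M I ∧ (0 : X) ∈ I ∧ I ≠ {0} ∧
    ∀ J : Set X, IsSetIdeal M J → (0 : X) ∈ J → J ⊆ I → J ≠ {0} → J = I

/-- `Rnk_i(g) = min {rk(u) : θ_i(u) = g}`. -/
def rnkElt {Q A : Type*} [Fintype Q] [DecidableEq Q] (δ : Q → A → Q) {k : ℕ}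
    {nn : Fin k → ℕ}
    (e : Ralg δ →ₐ[ℂ] ∀ i : Fin k, Matrix (Fin (nn i)) (Fin (nn i)) ℂ)
    (i : Fin k) (g : Matrix (Fin (nn i)) (Fin (nn i)) ℂ) : ℕ :=
  sInf {m | ∃ u : List A, theta δ e u i = g ∧ wordRank δ u = m}

/-- `Rnk(ℐ_i) = min {Rnk_i(g) : g ∈ ℐ_i ∖ {0}}`. -/
def rnkIdeal {Q A : Type*} [Fintype Q] [DecidableEq Q] (δ : Q → A → Q) {k : ℕ}
    {nn : Fin k → ℕ}
    (e : Ralg δ →ₐ[ℂ] ∀ i : Fin k, Matrix (Fin (nn i)) (Fin (nn i)) ℂ)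
    (i : Fin k) (I : Set (Matrix (Fin (nn i)) (Fin (nn i)) ℂ)) : ℕ :=
  sInf {m | ∃ g ∈ I, g ≠ 0 ∧ rnkElt δ e i g = m}

/-- `w` `u`-represents `g`: `w ∈ Σ*uΣ*`, `θ_i(w) = g`, and either `g = 0` or `rk(w)` is
minimum among all words with the first two properties. -/
def URepresents {Q A : Type*} [Fintype Q] [DecidableEq Q] (δ : Q → A → Q) {k : ℕ}
    {nn : Fin k → ℕ}
    (e : Ralg δ →ₐ[ℂ] ∀ i : Fin k, Matrix (Fin (nn i)) (Fin (nn i)) ℂ)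
    (u : List A) (i : Fin k) (w : List A) (g : Matrix (Fin (nn i)) (Fin (nn i)) ℂ) : Prop :=
  InFactor u w ∧ theta δ e w i = g ∧
    (g = 0 ∨ ∀ w' : List A, InFactor u w' → theta δ e w' i = g → wordRank δ w ≤ wordRank δ w')

/-- The relation `σ_i` on `ℐ_i`. -/
def sigmaRel {Q A : Type*} [Fintype Q] [DecidableEq Q] (δ : Q → A → Q) {k : ℕ}
    {nn : Fin k → ℕ}
    (e : Ralg δ →ₐ[ℂ] ∀ i : Fin k, Matrix (Fin (nn i)) (Fin (nn i)) ℂ)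
    (i : Fin k) (u : List A)
    (g f : Matrix (Fin (nn i)) (Fin (nn i)) ℂ) : Prop :=
  g = f ∨ ∃ w₁ w₂ : List A, URepresents δ e u i w₁ g ∧ URepresents δ e u i w₂ f ∧
    1 < (imageSet δ w₁ ∩ imageSet δ w₂).card

/-- `T ⊆ [1,k]` is a core. -/
def IsCore {Q A : Type*} [Fintype Q] [DecidableEq Q] (δ : Q → A → Q) {k : ℕ}
    {nn : Fin k → ℕ}
    (e : Ralg δ →ₐ[ℂ] ∀ i : Fin k, Matrix (Fin (nn i)) (Fin (nn i)) ℂ)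
    (T : Set (Fin k)) : Prop :=
  ∀ x : List A, (∀ i ∈ T, theta δ e x i = 0) → ∀ i : Fin k, theta δ e x i = 0

/-- A minimal core. -/
def IsMinimalCore {Q A : Type*} [Fintype Q] [DecidableEq Q] (δ : Q → A → Q) {k : ℕ}
    {nn : Fin k → ℕ}
    (e : Ralg δ →ₐ[ℂ] ∀ i : Fin k, Matrix (Fin (nn i)) (Fin (nn i)) ℂ)
    (T : Set (Fin k)) : Prop :=
  IsCore δ e T ∧ ∀ T' : Set (Fin k), T' ⊆ T → IsCore δ e T' → T' = T

/-- An automaton congruence. -/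
def IsCongruence {Q A : Type*} (δ : Q → A → Q) (σ : Q → Q → Prop) : Prop :=
  Equivalence σ ∧ ∀ q p : Q, σ q p → ∀ u : List A, σ (actW δ q u) (actW δ p u)

/-- A simple automaton: the only congruences are the identity and the universal relation. -/
def IsSimple {Q A : Type*} (δ : Q → A → Q) : Prop :=
  ∀ σ : Q → Q → Prop, IsCongruence δ σ → σ = Eq ∨ σ = fun _ _ => True

/-! If `u` is radical, `ρ(u)` lies in the Jacobson radical of the finite-dimensional, hence
Artinian, algebra `ℛ`; that radical is a nilpotent ideal, so `ρ(u)` is a nilpotent endomorphism of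
`w⊥`, whose dimension is at most `n - 1`, and therefore `ρ(u ^ (n - 1)) = ρ(u) ^ (n - 1) = 0`.
A word acting as `0` on `w⊥` kills every difference `p - q` of states, i.e. sends all states to the
same one. -/

theorem isNilpotent_of_mem_jacobson_bot {R : Type*} [Ring R] [IsArtinianRing R] {x : R}
    (hx : x ∈ Ideal.jacobson (⊥ : Ideal R)) : IsNilpotent x := by
  obtain ⟨n, hn⟩ := IsArtinianRing.isNilpotent_jacobson_bot (R := R)
  exact ⟨n, by simpa [hn] using Ideal.pow_mem_pow hx n⟩

theorem Subalgebra.isNilpotent_of_forall_exists_mul_one_sub_mul_eq_one {K B : Type*} [Field K]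
    [Ring B] [Algebra K B] [FiniteDimensional K B] {S : Subalgebra K B} {x : B} (hxS : x ∈ S)
    (hx : ∀ y ∈ S, ∃ z ∈ S, z * (1 - y * x) = 1) : IsNilpotent x := by
  have : IsArtinianRing S := IsArtinianRing.of_finite K S
  suffices hjac : (⟨x, hxS⟩ : S) ∈ Ideal.jacobson ⊥ from
    (isNilpotent_of_mem_jacobson_bot hjac).map S.val
  refine Ideal.mem_jacobson_iff.mpr fun y => ?_
  obtain ⟨z, hz, hzy⟩ := hx (-y) (neg_mem y.2)
  refine ⟨⟨z, hz⟩, Ideal.mem_bot.mpr (Subtype.ext ?_)⟩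
  change z * y * x + z - 1 = 0
  rw [← hzy]
  noncomm_ring

theorem Module.End.pow_finrank_eq_zero_of_isNilpotent {R M : Type*} [CommRing R] [IsDomain R]
    [AddCommGroup M] [Module R M] [Module.Free R M] [Module.Finite R M]
    {f : Module.End R M} (hf : IsNilpotent f) : f ^ Module.finrank R M = 0 := by
  simpa [hf.charpoly_eq_X_pow_finrank] using f.aeval_self_charpoly

theorem actW_append {Q A : Type*} (δ : Q → A → Q) (q : Q) (a b : List A) :
    actW δ q (a ++ b) = actW δ (actW δ q a) b :=
  List.foldl_append

theorem finrank_Wperp_lt_card {Q : Type*} [Fintype Q] [Nonempty Q] :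
    Module.finrank ℂ (Wperp Q) < Fintype.card Q := by
  have hne : Wperp Q ≠ ⊤ := fun h => by
    have h1 : (fun _ => (1 : ℂ)) ∈ Wperp Q := h ▸ Submodule.mem_top
    simp [mem_Wperp] at h1
  simpa using Submodule.finrank_lt hne

section Automaton

variable {Q A : Type*} [Fintype Q] [DecidableEq Q] (δ : Q → A → Q)

theorem IsSynchronizing.nonempty (h : IsSynchronizing δ) : Nonempty Q := by
  obtain ⟨u, hu⟩ := h
  obtain ⟨q, -⟩ := Finset.card_pos.mp (hu.symm ▸ Nat.one_pos : 0 < wordRank δ u)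
  exact ⟨q⟩

theorem isReset_of_forall_actW_eq [Nonempty Q] {u : List A}
    (h : ∀ p q : Q, actW δ p u = actW δ q u) : IsReset δ u := by
  refine le_antisymm (Finset.card_le_one.mpr ?_)
    (Finset.card_pos.mpr (Finset.univ_nonempty.image _))
  simp only [imageSet, Finset.mem_image, Finset.mem_univ, true_and]
  rintro _ ⟨p, rfl⟩ _ ⟨q, rfl⟩
  exact h p q

theorem piLin_single (u : List A) (q : Q) :
    piLin δ u (Pi.single q 1) = Pi.single (actW δ q u) 1 := by
  funext p
  change ∑ r ∈ Finset.univ.filter (fun r => actW δ r u = p), Pi.single q (1 : ℂ) r = _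
  rw [Finset.sum_pi_single']
  simp [Pi.single_apply, eq_comm]

theorem piLin_nil : piLin δ ([] : List A) = LinearMap.id := by
  ext q p
  simp [piLin_single, actW]

theorem piLin_append (a b : List A) : piLin δ (a ++ b) = piLin δ b ∘ₗ piLin δ a := by
  ext q p
  simp [piLin_single, actW_append]

theorem rhoEnd_nil : rhoEnd δ ([] : List A) = 1 := by
  ext v
  simp [rhoEnd, piLin_nil]

theorem rhoEnd_append (a b : List A) : rhoEnd δ (a ++ b) = rhoEnd δ b * rhoEnd δ a := by
  ext v
  simp [rhoEnd, piLin_append]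

theorem rhoEnd_flatten_replicate (u : List A) (m : ℕ) :
    rhoEnd δ (List.replicate m u).flatten = rhoEnd δ u ^ m := by
  induction m with
  | zero => exact rhoEnd_nil δ
  | succ m ih => rw [List.replicate_succ, List.flatten_cons, rhoEnd_append, ih, pow_succ]

theorem actW_eq_of_rhoEnd_eq_zero {u : List A} (hu : rhoEnd δ u = 0) (p q : Q) :
    actW δ p u = actW δ q u := by
  have hmem : Pi.single p (1 : ℂ) - Pi.single q 1 ∈ Wperp Q := by
    simp [mem_Wperp, Finset.sum_sub_distrib]
  have h := congrArg Subtype.val (LinearMap.congr_fun hu ⟨_, hmem⟩)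
  simp only [rhoEnd, LinearMap.restrict_apply, map_sub, piLin_single, LinearMap.zero_apply,
    ZeroMemClass.coe_zero, sub_eq_zero] at h
  simpa [Pi.single_apply, eq_comm] using congrFun h (actW δ p u)

theorem isNilpotent_rhoEnd_of_mem_radWords {u : List A} (hu : u ∈ RadWords δ) :
    IsNilpotent (rhoEnd δ u) := by
  -- `Ralg δ` is a subalgebra for the `Semiring` instance of `Module.End`, which matches the
  -- `Ring` one only after unfolding; fixing `S`, `x` and elaborating `hu.2` last makes Lean do it.
  obtain ⟨n, hn⟩ := Subalgebra.isNilpotent_of_forall_exists_mul_one_sub_mul_eq_one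
    (S := Ralg δ) (x := rho δ u) hu.1 (by exact hu.2)
  exact ⟨n, MulOpposite.op_injective (by simpa [rho] using hn)⟩

end Automaton

theorem stmt18 {Q A : Type*} [Fintype Q] [DecidableEq Q] (δ : Q → A → Q)
    (hsync : IsSynchronizing δ)
    (u : List A) (hu : u ∈ RadWords δ) :
    IsReset δ (List.flatten (List.replicate (Fintype.card Q - 1) u)) := by
  have := hsync.nonempty
  have hpow : rhoEnd δ u ^ Module.finrank ℂ (Wperp Q) = 0 :=
    Module.End.pow_finrank_eq_zero_of_isNilpotent (isNilpotent_rhoEnd_of_mem_radWords δ hu)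
  have hzero : rhoEnd δ (List.replicate (Fintype.card Q - 1) u).flatten = 0 := by
    rw [rhoEnd_flatten_replicate]
    exact pow_eq_zero_of_le (Nat.le_sub_one_of_lt finrank_Wperp_lt_card) hpow
  exact isReset_of_forall_actW_eq δ (actW_eq_of_rhoEnd_eq_zero δ hzero)

end
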